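/- arXiv:2205.01328 — 3 statements merged into one kernel-verified Lean document; each statement's English description precedes it below -/
import Mathlib

section
/- For any N×N complex matrix A and any fixed x ∈ {-1,1}^N, the monomial Π_{j=1}^N (A_j · x) equals (1/(N! 2^N)) Σ_{x' ∈ {-1,1}^N} (Π_{k=1}^N x'_k)(x'^T A x)^N, where A_j is the j-th row of A (Kan's monomial identity specialized to the rows A_j · x). -/
/-!
Expand `(∑ k, ε k * y k) ^ n` (with `n = card ι`) as a sum over all maps `f : ι → ι`
and sum over the signs `ε` first. If `f` misses some `j`, flipping `ε j` negates the
term, so the signed sum vanishes; if `f` is a permutation, the term is `∏ k, (ε k)² = 1`,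
so the signed sum is `2 ^ n`. The `n!` permutations then give `n! 2ⁿ ∏ k, y k`
(Kan's identity), which is the theorem for `y j = A_j · x`.
-/

open Finset BigOperators

/-- A sign `∈ {-1,1}`, encoded by a Boolean. -/
def sgn (b : Bool) : ℂ := if b then 1 else -1

lemma sgn_mul_self (b : Bool) : sgn b * sgn b = 1 := by cases b <;> simp [sgn]

lemma sgn_not (b : Bool) : sgn (!b) = -sgn b := by cases b <;> simp [sgn]

variable {ι κ : Type*} [Fintype ι] [DecidableEq ι]

lemma sum_prod_sgn_mul_prod_sgn_perm (σ : Equiv.Perm ι) :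
    ∑ ε : ι → Bool, (∏ k, sgn (ε k)) * ∏ i, sgn (ε (σ i)) = 2 ^ Fintype.card ι := by
  calc ∑ ε : ι → Bool, (∏ k, sgn (ε k)) * ∏ i, sgn (ε (σ i))
      = ∑ _ε : ι → Bool, (1 : ℂ) := sum_congr rfl fun ε _ => by
        simp only [Equiv.prod_comp σ fun k => sgn (ε k), ← prod_mul_distrib, sgn_mul_self,
          prod_const_one]
    _ = 2 ^ Fintype.card ι := by simp

lemma prod_sgn_update_not (ε : ι → Bool) (j : ι) :
    ∏ k, sgn (Function.update ε j (!ε j) k) = -∏ k, sgn (ε k) := by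
  rw [← mul_prod_erase univ _ (mem_univ j),
    ← mul_prod_erase univ (fun k => sgn (ε k)) (mem_univ j), Function.update_self,
    sgn_not, neg_mul]
  congr 2
  exact prod_congr rfl fun k hk => by rw [Function.update_of_ne (ne_of_mem_erase hk)]

lemma sum_prod_sgn_mul_prod_sgn_comp_of_notMem_range [Fintype κ] {f : κ → ι} {j : ι}
    (hj : j ∉ Set.range f) :
    ∑ ε : ι → Bool, (∏ k, sgn (ε k)) * ∏ i, sgn (ε (f i)) = 0 := by
  have hflip : Function.Involutive fun ε : ι → Bool => Function.update ε j (!ε j) := by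
    intro ε
    simp
  refine self_eq_neg.mp
    ((Fintype.sum_equiv hflip.toPerm _ _ fun ε => ?_).trans (sum_neg_distrib _))
  have hfix : ∀ i, Function.update ε j (!ε j) (f i) = ε (f i) := fun i =>
    Function.update_of_ne (fun h => hj ⟨i, h⟩) _ _
  simp only [Function.Involutive.coe_toPerm, prod_sgn_update_not, hfix, neg_mul, neg_neg]

theorem sum_prod_sgn_mul_sum_sgn_mul_pow_card (y : ι → ℂ) :
    ∑ ε : ι → Bool, (∏ k, sgn (ε k)) * (∑ k, sgn (ε k) * y k) ^ Fintype.card ι =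
      (Fintype.card ι).factorial * 2 ^ Fintype.card ι * ∏ k, y k := by
  have hexpand : ∀ ε : ι → Bool, (∑ k, sgn (ε k) * y k) ^ Fintype.card ι =
      ∑ f : ι → ι, (∏ i, y (f i)) * ∏ i, sgn (ε (f i)) := fun ε => by
    rw [← card_univ, ← prod_const, Fintype.prod_sum]
    exact sum_congr rfl fun f _ => by rw [← prod_mul_distrib]; simp only [mul_comm]
  have hvanish : ∀ f ∉ Set.range ((⇑) : Equiv.Perm ι → ι → ι),
      (∏ i, y (f i)) * ∑ ε : ι → Bool, (∏ k, sgn (ε k)) * ∏ i, sgn (ε (f i)) = 0 := by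
    intro f hf
    have hsurj : ¬ Function.Surjective f := fun h =>
      hf ⟨Equiv.ofBijective f (Finite.surjective_iff_bijective.mp h), rfl⟩
    obtain ⟨j, hj⟩ := not_forall.mp hsurj
    rw [sum_prod_sgn_mul_prod_sgn_comp_of_notMem_range hj, mul_zero]
  calc ∑ ε : ι → Bool, (∏ k, sgn (ε k)) * (∑ k, sgn (ε k) * y k) ^ Fintype.card ι
      = ∑ f : ι → ι,
          (∏ i, y (f i)) * ∑ ε : ι → Bool, (∏ k, sgn (ε k)) * ∏ i, sgn (ε (f i)) := by
        simp only [hexpand, mul_sum, mul_left_comm]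
        exact sum_comm
    _ = ∑ σ : Equiv.Perm ι, (∏ i, y (σ i)) * 2 ^ Fintype.card ι :=
        (Fintype.sum_of_injective _ DFunLike.coe_injective _ _ hvanish fun σ => by
          rw [sum_prod_sgn_mul_prod_sgn_perm]).symm
    _ = (Fintype.card ι).factorial * 2 ^ Fintype.card ι * ∏ k, y k := by
        simp only [Equiv.prod_comp, sum_const, card_univ, Fintype.card_perm, nsmul_eq_mul]
        ring

theorem kan_monomial_identity_general (N : ℕ) (A : Matrix (Fin N) (Fin N) ℂ)
    (x : Fin N → Bool) :
    ∏ j : Fin N, ∑ k : Fin N, A j k * sgn (x k) =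
      (1 / ((N.factorial : ℂ) * 2 ^ N)) *
        ∑ x' : Fin N → Bool,
          (∏ k : Fin N, sgn (x' k)) *
            (∑ j : Fin N, ∑ k : Fin N, sgn (x' j) * A j k * sgn (x k)) ^ N := by
  have hbilinear : ∀ x' : Fin N → Bool,
      ∑ j, ∑ k, sgn (x' j) * A j k * sgn (x k) = ∑ j, sgn (x' j) * ∑ k, A j k * sgn (x k) :=
    fun x' => sum_congr rfl fun j _ => by simp only [mul_sum, mul_assoc]
  have hkan := sum_prod_sgn_mul_sum_sgn_mul_pow_card fun j => ∑ k, A j k * sgn (x k)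
  rw [Fintype.card_fin] at hkan
  have hne : (N.factorial : ℂ) * 2 ^ N ≠ 0 :=
    mul_ne_zero (Nat.cast_ne_zero.mpr N.factorial_ne_zero) (pow_ne_zero _ two_ne_zero)
  simp only [hbilinear]
  rw [hkan, one_div, inv_mul_cancel_left₀ hne]

/-- Kan's monomial identity applied to the row products `A_j · x`. -/
theorem kan_monomial_identity (N : ℕ) (hN : 1 ≤ N) (A : Matrix (Fin N) (Fin N) ℂ)
    (x : Fin N → Bool) :
    ∏ j : Fin N, ∑ k : Fin N, A j k * sgn (x k) =
      (1 / ((N.factorial : ℂ) * 2 ^ N)) *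
        ∑ x' : Fin N → Bool,
          (∏ k : Fin N, sgn (x' k)) *
            (∑ j : Fin N, ∑ k : Fin N, sgn (x' j) * A j k * sgn (x k)) ^ N :=
  kan_monomial_identity_general N A x
end

section
/- The Glynn-Kan formula: for any N×N complex matrix A with N ≥ 1, Per(A) = (1/(N! 2^{2N})) Σ_{x,x' ∈ {-1,1}^N} (Π_{k=1}^N x_k x'_k)(x'^T A x)^N. -/
/-!
Expanding `(x'ᵀ A x) ^ N` as a sum over pairs of maps `σ τ : Fin N → Fin N` of
`∏ i, x'_{σ i} A_{σ i, τ i} x_{τ i}`, the sums over the sign vectors factor.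
`∑ x, (∏ k, x_k) * ∏ i, x_{τ i}` equals `2 ^ N` when `τ` is a bijection and vanishes otherwise,
since a coordinate missed by `τ` then occurs to an odd power. What remains is
`4 ^ N * ∑ σ τ : Perm, ∏ i, A_{σ i, τ i} = 4 ^ N * N! * Per A`.
-/

open Finset BigOperators

noncomputable def perm {n : Type*} [Fintype n] [DecidableEq n] (A : Matrix n n ℂ) : ℂ :=
  ∑ σ : Equiv.Perm n, ∏ j, A j (σ j)

open Function

lemma sum_comm_sum_comm {α β γ δ M : Type*} [AddCommMonoid M] {s : Finset α} {t : Finset β}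
    {u : Finset γ} {v : Finset δ} (f : α → β → γ → δ → M) :
    ∑ a ∈ s, ∑ b ∈ t, ∑ c ∈ u, ∑ d ∈ v, f a b c d = ∑ c ∈ u, ∑ d ∈ v, ∑ a ∈ s, ∑ b ∈ t, f a b c d :=
  calc _ = ∑ a ∈ s, ∑ c ∈ u, ∑ d ∈ v, ∑ b ∈ t, f a b c d :=
        sum_congr rfl fun _ _ => sum_comm.trans (sum_congr rfl fun _ _ => sum_comm)
    _ = _ := sum_comm.trans (sum_congr rfl fun _ _ => sum_comm)

lemma sum_sgn_pow (m : ℕ) : ∑ b : Bool, sgn b ^ m = if Even m then 2 else 0 := by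
  rcases Nat.even_or_odd m with h | h
  · simp [sgn, h.neg_one_pow, h]
  · simp [sgn, h.neg_one_pow, Nat.not_even_iff_odd.mpr h]

lemma card_fiber_eq_one_of_bijective {ι κ : Type*} [DecidableEq ι] [Fintype κ] {g : κ → ι}
    (hg : Bijective g) (k : ι) : #{i | g i = k} = 1 :=
  card_eq_one.mpr ⟨(Equiv.ofBijective g hg).symm k, by
    ext i
    simp [Equiv.eq_symm_apply]⟩

section

variable {ι : Type*} [Fintype ι] [DecidableEq ι]

lemma prod_mul_prod_comp_eq_prod_pow {κ M : Type*} [Fintype κ] [CommMonoid M]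
    (a : ι → M) (g : κ → ι) :
    (∏ k, a k) * ∏ i, a (g i) = ∏ k, a k ^ (1 + #{i | g i = k}) := by
  rw [← prod_fiberwise' univ g a, ← prod_mul_distrib]
  simp [pow_add]

lemma sum_prod_sgn_mul_prod_sgn_comp (g : ι → ι) :
    ∑ x : ι → Bool, (∏ k, sgn (x k)) * ∏ i, sgn (x (g i)) =
      if Bijective g then 2 ^ Fintype.card ι else 0 := by
  simp_rw [prod_mul_prod_comp_eq_prod_pow,
    ← Fintype.prod_sum fun k b => sgn b ^ (1 + #{i | g i = k}), sum_sgn_pow]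
  split_ifs with hg
  · simp [card_fiber_eq_one_of_bijective hg]
  · obtain ⟨k, hk⟩ : ∃ k, ∀ i, g i ≠ k := by
      simpa [Surjective] using mt Finite.surjective_iff_bijective.mp hg
    exact prod_eq_zero (mem_univ k) (by simp [hk])

lemma sum_ite_bijective {R : Type*} [AddCommMonoid R] (F : (ι → ι) → R) :
    ∑ f : ι → ι, (if Bijective f then F f else 0) = ∑ σ : Equiv.Perm ι, F σ := by
  rw [← sum_filter, sum_subtype (p := Bijective) _ (fun f => by simp) F]
  exact Fintype.sum_equiv Equiv.bijectiveEquiv _ _ fun _ => rfl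

lemma sum_perm_sum_perm_prod_eq_factorial_mul_perm (A : Matrix ι ι ℂ) :
    ∑ σ : Equiv.Perm ι, ∑ τ : Equiv.Perm ι, ∏ i, A (σ i) (τ i) =
      (Fintype.card ι).factorial * perm A := by
  have h (σ : Equiv.Perm ι) : ∑ τ : Equiv.Perm ι, ∏ i, A (σ i) (τ i) = perm A := by
    exact Fintype.sum_equiv (Equiv.mulRight σ⁻¹) _ _ fun τ =>
      Fintype.prod_equiv σ _ _ fun i => by simp
  simp [h, Fintype.card_perm]

lemma bilinear_pow_card_eq_sum {R : Type*} [CommSemiring R] (u v : ι → R) (A : Matrix ι ι R) :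
    (∑ j, ∑ k, u j * A j k * v k) ^ Fintype.card ι =
      ∑ σ : ι → ι, ∑ τ : ι → ι, (∏ i, u (σ i)) * (∏ i, v (τ i)) * ∏ i, A (σ i) (τ i) := by
  rw [← card_univ, ← prod_const, Fintype.prod_sum]
  simp_rw [Fintype.prod_sum, prod_mul_distrib]
  exact sum_congr rfl fun σ _ => sum_congr rfl fun τ _ => by ring

lemma sum_sum_prod_sgn_mul_bilinear_pow_card (A : Matrix ι ι ℂ) :
    ∑ x : ι → Bool, ∑ x' : ι → Bool, (∏ k, sgn (x k) * sgn (x' k)) *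
        (∑ j, ∑ k, sgn (x' j) * A j k * sgn (x k)) ^ Fintype.card ι =
      2 ^ Fintype.card ι * 2 ^ Fintype.card ι * (Fintype.card ι).factorial * perm A := by
  calc _ = ∑ σ : ι → ι, ∑ τ : ι → ι,
          (∑ x : ι → Bool, (∏ k, sgn (x k)) * ∏ i, sgn (x (τ i))) *
          (∑ x' : ι → Bool, (∏ k, sgn (x' k)) * ∏ i, sgn (x' (σ i))) * ∏ i, A (σ i) (τ i) := by
        simp_rw [sum_mul_sum, sum_mul, bilinear_pow_card_eq_sum, mul_sum, prod_mul_distrib]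
        rw [sum_comm_sum_comm]
        exact sum_congr rfl fun σ _ => sum_congr rfl fun τ _ => sum_congr rfl fun x _ =>
          sum_congr rfl fun x' _ => by ring
    _ = ∑ σ : ι → ι, ∑ τ : ι → ι, if Bijective τ then if Bijective σ then
          2 ^ Fintype.card ι * 2 ^ Fintype.card ι * ∏ i, A (σ i) (τ i) else 0 else 0 := by
        simp_rw [sum_prod_sgn_mul_prod_sgn_comp, ite_zero_mul_ite_zero, ite_zero_mul, ite_and]
    _ = 2 ^ Fintype.card ι * 2 ^ Fintype.card ι *
          ∑ σ : Equiv.Perm ι, ∑ τ : Equiv.Perm ι, ∏ i, A (σ i) (τ i) := by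
        simp_rw [sum_ite_bijective, sum_ite_irrel, sum_const_zero, sum_ite_bijective, mul_sum]
    _ = _ := by rw [sum_perm_sum_perm_prod_eq_factorial_mul_perm]; ring

end

theorem glynn_kan_formula_general (N : ℕ) (A : Matrix (Fin N) (Fin N) ℂ) :
    perm A =
      (1 / ((N.factorial : ℂ) * 2 ^ (2 * N))) *
        ∑ x : Fin N → Bool, ∑ x' : Fin N → Bool,
          (∏ k : Fin N, sgn (x k) * sgn (x' k)) *
            (∑ j : Fin N, ∑ k : Fin N, sgn (x' j) * A j k * sgn (x k)) ^ N := by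
  have hsum := sum_sum_prod_sgn_mul_bilinear_pow_card A
  rw [Fintype.card_fin] at hsum
  have hfac : (N.factorial : ℂ) ≠ 0 := Nat.cast_ne_zero.mpr N.factorial_ne_zero
  rw [hsum]
  field_simp
  ring

/-- The Glynn-Kan formula for the permanent. -/
theorem glynn_kan_formula (N : ℕ) (hN : 1 ≤ N) (A : Matrix (Fin N) (Fin N) ℂ) :
    perm A =
      (1 / ((N.factorial : ℂ) * 2 ^ (2 * N))) *
        ∑ x : Fin N → Bool, ∑ x' : Fin N → Bool,
          (∏ k : Fin N, sgn (x k) * sgn (x' k)) *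
            (∑ j : Fin N, ∑ k : Fin N, sgn (x' j) * A j k * sgn (x k)) ^ N :=
  glynn_kan_formula_general N A
end

section
/- For an N×N real matrix B, Per(B) = (1/N!) ⟨φ| P · H(B)^N |φ⟩, where |φ⟩ = 2^{-N} Σ_{y ∈ {0,1}^{2N}} |y⟩ is the uniform superposition on 2N qubits, P = ⊗_{k=1}^N Z_k Z_{N+k}, and H(B) = Σ_{j,k=1}^N B_{jk} Z_{N+j} Z_k; equivalently, in terms of diagonal operators on {-1,1}^{2N}, Per(B) = (1/(N! 2^{2N})) Σ_{s ∈ {-1,1}^{2N}} (Π_{k=1}^N s_k s_{N+k})(Σ_{j,k} B_{jk} s_{N+j} s_k)^N. -/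
open Finset BigOperators

/-- The permanent of a real square matrix. -/
noncomputable def permR {n : Type*} [Fintype n] [DecidableEq n] (B : Matrix n n ℝ) : ℝ :=
  ∑ σ : Equiv.Perm n, ∏ j, B j (σ j)

/-- A sign `∈ {-1,1}`, encoded by a Boolean. -/
def sgnR (b : Bool) : ℝ := if b then 1 else -1

/-!
Expanding `H(B)^N` gives a sum over pairs of index maps `a b : Fin N → Fin N` of
`∏ i, B (a i) (b i)` times the sign monomials `∏ i, s' (a i)` and `∏ i, s (b i)`. Against the
parity `∏ k, s k`, the average of `∏ i, s (b i)` is `1` if every `k` occurs an odd number of times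
in `b`, and `0` otherwise; for a self-map of a finite set that means `b` is a permutation. The same
holds for `a`, so only `∑ π, ∑ τ, ∏ i, B (π i) (τ i) = N! · Per(B)` survives.
-/

open Function Fintype

lemma sum_sgnR_pow (m : ℕ) : ∑ b : Bool, sgnR b ^ m = 1 + (-1) ^ m := by
  simp [sgnR]

lemma sum_sum_pow_card {α ι κ R : Type*} [Fintype α] [DecidableEq α] [Fintype ι] [Fintype κ]
    [CommSemiring R] (T : ι → κ → R) :
    (∑ j, ∑ k, T j k) ^ card α = ∑ a : α → ι, ∑ b : α → κ, ∏ i, T (a i) (b i) := by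
  simp only [← Finset.card_univ, ← prod_const, Fintype.prod_sum]

section

variable {ι : Type*} [Fintype ι] [DecidableEq ι]

lemma prod_sgnR_comp (s : ι → Bool) (g : ι → ι) :
    ∏ i, sgnR (s (g i)) = ∏ k, sgnR (s k) ^ #{i | g i = k} := by
  simp_rw [← Finset.prod_fiberwise' univ g (fun k => sgnR (s k)), prod_const]

theorem sum_prod_sgnR_mul_prod_sgnR_comp (g : ι → ι) :
    ∑ s : ι → Bool, (∏ k, sgnR (s k)) * ∏ i, sgnR (s (g i)) =
      if Bijective g then 2 ^ card ι else 0 := by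
  have hfactor : ∀ s : ι → Bool, (∏ k, sgnR (s k)) * ∏ i, sgnR (s (g i)) =
      ∏ k, sgnR (s k) ^ (#{i | g i = k} + 1) := by
    intro s
    rw [prod_sgnR_comp s g, ← prod_mul_distrib]
    simp only [pow_succ']
  simp only [hfactor, ← Fintype.prod_sum (fun k b => sgnR b ^ (#{i | g i = k} + 1)),
    sum_sgnR_pow]
  split_ifs with hg
  · have hfiber : ∀ k, #{i | g i = k} = 1 := fun k => by
      rw [card_eq_one]
      exact ⟨(Equiv.ofBijective g hg).symm k, by ext; simp [Equiv.eq_symm_apply]⟩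
    norm_num [hfiber]
  · obtain ⟨k, hk⟩ : ∃ k, ∀ i, g i ≠ k := by
      simpa [Surjective] using mt Finite.surjective_iff_bijective.mp hg
    refine prod_eq_zero (mem_univ k) ?_
    simp [filter_eq_empty_iff.mpr fun i _ => hk i]

lemma sum_ite_bijective_eq_sum_perm {M : Type*} [AddCommMonoid M] (F : (ι → ι) → M) :
    ∑ g : ι → ι, (if Bijective g then F g else 0) = ∑ σ : Equiv.Perm ι, F σ := by
  rw [← sum_filter]
  refine (sum_nbij (fun σ : Equiv.Perm ι => ⇑σ) (by simp)
    DFunLike.coe_injective.injOn (fun g hg => ?_) fun _ _ => rfl).symm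
  exact ⟨Equiv.ofBijective g (mem_filter.mp hg).2, mem_univ _, rfl⟩

lemma sum_perm_sum_perm_prod (B : Matrix ι ι ℝ) :
    ∑ π : Equiv.Perm ι, ∑ τ : Equiv.Perm ι, ∏ i, B (π i) (τ i) = (card ι).factorial * permR B := by
  have hπ : ∀ π : Equiv.Perm ι, ∑ τ : Equiv.Perm ι, ∏ i, B (π i) (τ i) = permR B := fun π => by
    rw [permR, ← Equiv.sum_comp (Equiv.mulRight π)]
    exact sum_congr rfl fun σ _ => Equiv.prod_comp π fun j => B j (σ j)
  simp [hπ, Fintype.card_perm]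

theorem sum_prod_sgnR_mul_ising_pow_card (B : Matrix ι ι ℝ) :
    ∑ s : ι → Bool, ∑ s' : ι → Bool, (∏ k, sgnR (s k) * sgnR (s' k)) *
        (∑ j, ∑ k, B j k * sgnR (s' j) * sgnR (s k)) ^ card ι =
      (card ι).factorial * 2 ^ (2 * card ι) * permR B := by
  set χ : (ι → Bool) → (ι → ι) → ℝ := fun s g => (∏ k, sgnR (s k)) * ∏ i, sgnR (s (g i))
  calc _ = ∑ s : ι → Bool, ∑ s' : ι → Bool, ∑ a : ι → ι, ∑ b : ι → ι,
          (∏ i, B (a i) (b i)) * (χ s' a * χ s b) := by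
        refine sum_congr rfl fun s _ => sum_congr rfl fun s' _ => ?_
        simp only [sum_sum_pow_card, mul_sum, χ, prod_mul_distrib]
        exact sum_congr rfl fun a _ => sum_congr rfl fun b _ => by ring
    _ = ∑ a : ι → ι, ∑ b : ι → ι, (∏ i, B (a i) (b i)) * ((∑ s', χ s' a) * ∑ s, χ s b) := by
        simp only [mul_sum, sum_mul,
          sum_comm (s := (univ : Finset (ι → Bool))) (t := (univ : Finset (ι → ι)))]
    _ = ∑ a : ι → ι, (if Bijective a then 2 ^ card ι else 0) *
          ∑ b : ι → ι, (if Bijective b then 2 ^ card ι else 0) * ∏ i, B (a i) (b i) := by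
        simp only [χ, sum_prod_sgnR_mul_prod_sgnR_comp, mul_sum]
        exact sum_congr rfl fun a _ => sum_congr rfl fun b _ => by ring
    _ = 2 ^ card ι * 2 ^ card ι * ∑ π : Equiv.Perm ι, ∑ τ : Equiv.Perm ι, ∏ i, B (π i) (τ i) := by
        simp only [ite_mul, zero_mul, sum_ite_bijective_eq_sum_perm, ← mul_sum, mul_assoc]
    _ = _ := by rw [sum_perm_sum_perm_prod]; ring

end

/-- `s k` and `s' k` are the signs of qubits `k` and `N + k`. -/
theorem perm_as_expectation_general (N : ℕ) (B : Matrix (Fin N) (Fin N) ℝ) :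
    permR B =
      (1 / ((N.factorial : ℝ) * 2 ^ (2 * N))) *
        ∑ s : Fin N → Bool, ∑ s' : Fin N → Bool,
          (∏ k : Fin N, sgnR (s k) * sgnR (s' k)) *
            (∑ j : Fin N, ∑ k : Fin N, B j k * sgnR (s' j) * sgnR (s k)) ^ N := by
  have h := sum_prod_sgnR_mul_ising_pow_card B
  rw [Fintype.card_fin] at h
  rw [h]
  field_simp

/-- `Per(B) = (1/N!) ⟨φ| P · H(B)^N |φ⟩`: since the parity operator `P` and the Ising
operator `H(B)` are diagonal in the computational basis, the expectation value in the
uniform superposition `|φ⟩` on `2N` qubits reduces to the average over all sign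
configurations `s ∈ {-1,1}^{2N}`, written here as pairs `(s, s')` with
`s_k = s k` and `s_{N+k} = s' k`. -/
theorem perm_as_expectation (N : ℕ) (hN : 1 ≤ N) (B : Matrix (Fin N) (Fin N) ℝ) :
    permR B =
      (1 / ((N.factorial : ℝ) * 2 ^ (2 * N))) *
        ∑ s : Fin N → Bool, ∑ s' : Fin N → Bool,
          (∏ k : Fin N, sgnR (s k) * sgnR (s' k)) *
            (∑ j : Fin N, ∑ k : Fin N, B j k * sgnR (s' j) * sgnR (s k)) ^ N :=
  perm_as_expectation_general N B
end
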